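/- Let g ≥ 2 be an integer and let m : ℚ → ℕ be a slope datum of genus g (see context). Assume moreover that m(0) ≤ g − 2. Then for every finite multiset T of rational numbers with card(T) = g such that every rational number λ occurs in T at most m(λ) times, the sum of the elements of T (with multiplicity) is at least 1. -/
import Mathlib


/-- **Slope estimate for non-Hodge-Witt abelian varieties** (Theorem 2.2 of the paper,
arithmetic form).  A slope datum of genus `g` is a finitely supported `m : ℚ → ℕ` supported
in `[0,1]`, of total mass `2g`, symmetric under `λ ↦ 1 - λ`, and such that the denominator
of each slope in its support divides its multiplicity.  If moreover `m 0 ≤ g - 2`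
(non-Hodge-Witt), then any sum of `g` slopes chosen with multiplicities bounded by `m`
is at least `1`. -/
theorem stmt_0 (g : ℕ) (hg : 2 ≤ g) (m : ℚ →₀ ℕ)
    (hsupp : ∀ l : ℚ, m l ≠ 0 → 0 ≤ l ∧ l ≤ 1)
    (htotal : ∑ l ∈ m.support, m l = 2 * g)
    (hdual : ∀ l : ℚ, m l = m (1 - l))
    (hden : ∀ l : ℚ, 0 < m l → (l.den : ℕ) ∣ m l)
    (hm0 : m 0 ≤ g - 2)
    (T : Multiset ℚ) (hcard : Multiset.card T = g)
    (hcount : ∀ l : ℚ, T.count l ≤ m l) :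
    1 ≤ T.sum := by
  classical
  -- every element of T lies in [0,1]
  have hmemT : ∀ x ∈ T, 0 ≤ x ∧ x ≤ 1 := by
    intro x hx
    refine hsupp x ?_
    have h1 : 1 ≤ T.count x := Multiset.one_le_count_iff_mem.mpr hx
    have := hcount x
    omega
  set P := T.filter (fun x => x ≠ 0) with hPdef
  set Z := T.filter (fun x => ¬ x ≠ 0) with hZdef
  have hsplit : P + Z = T := Multiset.filter_add_not _ T
  have hZzero : ∀ x ∈ Z, x = 0 := by
    intro x hx
    have := Multiset.of_mem_filter hx
    simpa using this
  -- card Z ≤ m 0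
  have hZcount : Multiset.count 0 Z = Multiset.card Z :=
    Multiset.count_eq_card.mpr (fun x hx => (hZzero x hx).symm)
  have hZle : Multiset.card Z ≤ m 0 := by
    have h1 : Multiset.count 0 Z ≤ Multiset.count 0 T :=
      Multiset.count_le_of_le 0 (Multiset.filter_le _ T)
    have := hcount 0
    omega
  have hcards : Multiset.card P + Multiset.card Z = g := by
    have := congrArg Multiset.card hsplit
    simpa [hcard] using this
  have hPcard2 : 2 ≤ Multiset.card P := by omega
  -- sum T = sum P
  have hsumT : T.sum = P.sum := by
    rw [← hsplit, Multiset.sum_add]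
    have : Z.sum = 0 := Multiset.sum_eq_zero hZzero
    rw [this, add_zero]
  -- minimum of P
  have hPne : P.toFinset.Nonempty := by
    rw [Multiset.toFinset_nonempty]
    intro h
    rw [h] at hPcard2; simp at hPcard2
  obtain ⟨μ, hμmem, hμmin⟩ := P.toFinset.exists_min_image id hPne
  rw [Multiset.mem_toFinset] at hμmem
  have hμmin' : ∀ x ∈ P, μ ≤ x := by
    intro x hx
    exact hμmin x (Multiset.mem_toFinset.mpr hx)
  have hμT : μ ∈ T := Multiset.mem_of_mem_filter hμmem
  have hμne : μ ≠ 0 := by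
    have := Multiset.of_mem_filter hμmem; simpa using this
  have hμrange := hmemT μ hμT
  have hμpos : 0 < μ := lt_of_le_of_ne hμrange.1 (Ne.symm hμne)
  -- m μ > 0
  have hmμpos : 0 < m μ := by
    have h1 : 1 ≤ T.count μ := Multiset.one_le_count_iff_mem.mpr hμT
    have := hcount μ
    omega
  have hdvd : (μ.den : ℕ) ∣ m μ := hden μ hmμpos
  have hdenle : μ.den ≤ m μ := Nat.le_of_dvd hmμpos hdvd
  -- 1 ≤ den * μ
  have hdenmul : 1 ≤ (μ.den : ℚ) * μ := by
    have hnum : 1 ≤ μ.num := Rat.num_pos.mpr hμpos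
    have : (μ.den : ℚ) * μ = (μ.num : ℚ) := by
      rw [mul_comm]
      exact_mod_cast Rat.mul_den_eq_num μ
    rw [this]
    exact_mod_cast hnum
  -- sum P ≥ card P • μ
  have hsumge : (Multiset.card P) • μ ≤ P.sum := Multiset.card_nsmul_le_sum hμmin'
  rw [hsumT]
  refine le_trans ?_ hsumge
  rw [nsmul_eq_mul]
  -- now show 1 ≤ card P * μ
  rcases le_or_gt (1/2 : ℚ) μ with hhalf | hhalf
  · -- card P ≥ 2, μ ≥ 1/2
    have h2 : (2 : ℚ) ≤ (Multiset.card P : ℚ) := by exact_mod_cast hPcard2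
    nlinarith
  · -- μ < 1/2 : show m μ ≤ card P
    have hne01 : (0 : ℚ) ≠ 1 := by norm_num
    have hμne1 : μ ≠ 1 := by intro h; rw [h] at hhalf; norm_num at hhalf
    have hμne1m : μ ≠ 1 - μ := by intro h; nlinarith [h]
    have h1mne0 : (1 - μ) ≠ 0 := by intro h; nlinarith [h]
    have h1mne1 : (1 - μ) ≠ 1 := by
      intro h; apply hμne; linarith [h, sub_eq_iff_eq_add.mp h]
    -- sum over {0, 1, μ, 1-μ}
    set S : Finset ℚ := {0, 1, μ, 1 - μ} with hS
    have hSsum : ∑ l ∈ S, m l = m 0 + m 1 + m μ + m (1 - μ) := by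
      rw [hS]
      rw [Finset.sum_insert (by simp [hμne.symm, hne01, h1mne0.symm]),
          Finset.sum_insert (by simp [hμne1.symm, h1mne1.symm]),
          Finset.sum_insert (by simp [hμne1m]), Finset.sum_singleton]
      ring
    have hSle : ∑ l ∈ S, m l ≤ ∑ l ∈ S ∪ m.support, m l :=
      Finset.sum_le_sum_of_subset Finset.subset_union_left
    have hUeq : ∑ l ∈ S ∪ m.support, m l = ∑ l ∈ m.support, m l :=
      (Finset.sum_subset Finset.subset_union_right
        (fun x _ hx => Finsupp.notMem_support_iff.mp hx)).symm
    have hm1 : m 1 = m 0 := by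
      have := hdual 1; simpa using this
    have hm1mμ : m (1 - μ) = m μ := (hdual μ).symm
    have hkey : m 0 + m 0 + m μ + m μ ≤ 2 * g := by
      rw [hUeq, htotal] at hSle
      rw [hSsum, hm1, hm1mμ] at hSle
      omega
    have hcardge : m μ ≤ Multiset.card P := by omega
    -- 1 ≤ den * μ ≤ m μ * μ ≤ card P * μ
    have h1 : (μ.den : ℚ) * μ ≤ (m μ : ℚ) * μ := by
      apply mul_le_mul_of_nonneg_right _ (le_of_lt hμpos)
      exact_mod_cast hdenle
    have h2 : (m μ : ℚ) * μ ≤ (Multiset.card P : ℚ) * μ := by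
      apply mul_le_mul_of_nonneg_right _ (le_of_lt hμpos)
      exact_mod_cast hcardge
    linarith
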